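/- Let n be a nonnegative integer, let a, b, c be complex numbers, and define T_n(a,b,c) = (1+a−c)_n (c)_n · _4F_3(−n, a/2, (a+1)/2, b ; a, 1+a−c, c ; 4) whenever (a)_n, (1+a−c)_n, (c)_n are all nonzero. Assume (a)_n ≠ 0, (1+a−c)_n ≠ 0, (c)_n ≠ 0, (c−b−n)_n ≠ 0, (1−b−n)_n ≠ 0, and (c−a−n)_n ≠ 0. Then T_n(a,b,c) = T_n(c−b−n, c−a−n, 1−b−n). -/

import Mathlib

/-!
Put `x = 1 + a - c`, `y = c`, `z = 1 - b - n`. Writing `(-n)_k = (-1)^k k! C(n,k)` and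
`(a/2)_k ((a+1)/2)_k 4^k = (a)_{2k} = (a)_k (a+k)_k` clears every denominator of `T n a b c`,
and summing the resulting terms with the Chu–Vandermonde identity turns it into
`∑_{i+j+k=n} n!/(i! j! k!) (z+i)_{n-i} (x+j)_{n-j} (y+k)_{n-k}`,
which is symmetric in `x, y, z`. The substitution `(a, b, c) ↦ (c-b-n, c-a-n, 1-b-n)` permutes
`(x, y, z)` cyclically.
-/

open Finset

/-- The rising factorial (Pochhammer symbol) `(a)_k = a(a+1)⋯(a+k-1)`. -/
noncomputable def poch (a : ℂ) (k : ℕ) : ℂ := ∏ i ∈ Finset.range k, (a + i)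

/-- `T n a b c = (1+a-c)_n (c)_n · ₄F₃(-n, a/2, (a+1)/2, b ; a, 1+a-c, c ; 4)`. -/
noncomputable def T (n : ℕ) (a b c : ℂ) : ℂ :=
  poch (1 + a - c) n * poch c n *
    ∑ k ∈ Finset.range (n + 1),
      (poch (-(n : ℂ)) k * poch (a / 2) k * poch ((a + 1) / 2) k * poch b k) /
        ((Nat.factorial k : ℂ) * poch a k * poch (1 + a - c) k * poch c k) * (4 : ℂ) ^ k

open Polynomial

lemma poch_eq_eval_ascPochhammer (a : ℂ) (k : ℕ) : poch a k = (ascPochhammer ℂ k).eval a := by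
  induction k with
  | zero => simp [poch]
  | succ k ih => rw [poch, prod_range_succ, ← poch, ih, ascPochhammer_succ_eval]

lemma poch_add (a : ℂ) (m k : ℕ) : poch a (m + k) = poch a m * poch (a + m) k := by
  simp only [poch, prod_range_add, Nat.cast_add, add_assoc]

lemma poch_ne_zero_of_le {a : ℂ} {m k : ℕ} (h : poch a m ≠ 0) (hk : k ≤ m) : poch a k ≠ 0 := by
  obtain ⟨l, rfl⟩ := Nat.exists_eq_add_of_le hk
  exact left_ne_zero_of_mul (poch_add a k l ▸ h)

lemma poch_one_sub_sub (a : ℂ) (k : ℕ) : poch (1 - a - k) k = (-1) ^ k * poch a k := by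
  rw [poch_eq_eval_ascPochhammer, poch_eq_eval_ascPochhammer,
    show 1 - a - k = -(a + k - 1) by ring, ascPochhammer_eval_neg_eq_descPochhammer,
    descPochhammer_eval_eq_ascPochhammer]
  ring_nf

lemma poch_neg_natCast {n k : ℕ} (hk : k ≤ n) :
    poch (-n) k = (-1) ^ k * k.factorial * n.choose k := by
  have h := poch_one_sub_sub ((n - k + 1 : ℕ) : ℂ) k
  rw [show 1 - ((n - k + 1 : ℕ) : ℂ) - k = -n by push_cast [Nat.cast_sub hk]; ring] at h
  rw [h, poch_eq_eval_ascPochhammer, ascPochhammer_nat_eq_natCast_descFactorial,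
    show n - k + 1 + k - 1 = n by omega, Nat.descFactorial_eq_factorial_mul_choose]
  push_cast
  ring

lemma poch_half_mul_poch_half_add_half (a : ℂ) (k : ℕ) :
    poch (a / 2) k * poch ((a + 1) / 2) k * 4 ^ k = poch a (2 * k) := by
  induction k with
  | zero => simp [poch]
  | succ k ih =>
    rw [show 2 * (k + 1) = 2 * k + 1 + 1 by ring]
    simp only [poch, prod_range_succ] at ih ⊢
    rw [← ih]
    push_cast
    ring

lemma poch_eq_smeval_descPochhammer (a : ℂ) (k : ℕ) :
    poch a k = (descPochhammer ℤ k).smeval (a + k - 1) := by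
  rw [descPochhammer_smeval_eq_ascPochhammer, ascPochhammer_smeval_eq_eval,
    poch_eq_eval_ascPochhammer]
  ring_nf

lemma sum_antidiagonal_choose_mul_poch_mul_poch (m : ℕ) (x y : ℂ) :
    ∑ ij ∈ antidiagonal m, (m.choose ij.1 : ℂ) * poch (x + ij.1) ij.2 * poch (y + ij.2) ij.1 =
      poch (x + y + m - 1) m := by
  rw [poch_eq_smeval_descPochhammer,
    show x + y + m - 1 + m - 1 = (y + m - 1) + (x + m - 1) by ring,
    Ring.descPochhammer_smeval_add _ (Commute.all _ _)]
  refine sum_congr rfl fun ⟨i, j⟩ hij ↦ ?_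
  rw [HasAntidiagonal.mem_antidiagonal] at hij
  subst hij
  rw [poch_eq_smeval_descPochhammer, poch_eq_smeval_descPochhammer]
  push_cast
  ring_nf

lemma Nat.choose_mul_choose_sub_comm (n i j : ℕ) :
    n.choose i * (n - i).choose j = n.choose j * (n - j).choose i := by
  have hi := Nat.choose_mul (n := n) (k := i + j) (s := i) (by omega)
  have hj := Nat.choose_mul (n := n) (k := i + j) (s := j) (by omega)
  rw [Nat.add_sub_cancel_left] at hi
  rw [Nat.add_sub_cancel] at hj
  rw [← hi, ← hj, Nat.choose_symm_add]

noncomputable def trinomialSum (n : ℕ) (g : ℕ → ℕ → ℕ → ℂ) : ℂ :=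
  ∑ i ∈ range (n + 1), ∑ j ∈ range (n - i + 1),
    (n.choose i * (n - i).choose j : ℂ) * g i j (n - i - j)

lemma trinomialSum_swap_right (n : ℕ) (g : ℕ → ℕ → ℕ → ℂ) :
    trinomialSum n (fun i j k ↦ g i k j) = trinomialSum n g := by
  refine sum_congr rfl fun i _ ↦ ?_
  rw [← sum_range_reflect (fun j ↦ (n.choose i * (n - i).choose j : ℂ) * g i j (n - i - j))]
  refine sum_congr rfl fun j hj ↦ ?_
  rw [mem_range] at hj
  rw [Nat.add_sub_cancel, Nat.choose_symm (by omega), show n - i - (n - i - j) = j by omega]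

lemma trinomialSum_swap_left (n : ℕ) (g : ℕ → ℕ → ℕ → ℂ) :
    trinomialSum n (fun i j k ↦ g j i k) = trinomialSum n g := by
  rw [trinomialSum, sum_comm' (t' := range (n + 1)) (s' := fun j ↦ range (n - j + 1))
    (by intro i j; simp only [mem_range]; omega)]
  refine sum_congr rfl fun j _ ↦ sum_congr rfl fun i _ ↦ ?_
  rw [show n - i - j = n - j - i by omega, ← Nat.cast_mul, ← Nat.cast_mul,
    Nat.choose_mul_choose_sub_comm]

noncomputable def pochTripleSum (n : ℕ) (x y z : ℂ) : ℂ :=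
  trinomialSum n fun i j k ↦ poch (x + i) (n - i) * poch (y + j) (n - j) * poch (z + k) (n - k)

lemma pochTripleSum_comm_left (n : ℕ) (x y z : ℂ) :
    pochTripleSum n x y z = pochTripleSum n y x z := by
  rw [pochTripleSum, ← trinomialSum_swap_left, pochTripleSum]
  congr 1
  ext i j k
  ring

lemma pochTripleSum_comm_right (n : ℕ) (x y z : ℂ) :
    pochTripleSum n x y z = pochTripleSum n x z y := by
  rw [pochTripleSum, ← trinomialSum_swap_right, pochTripleSum]
  congr 1
  ext i j k
  ring

lemma pochTripleSum_rotate (n : ℕ) (x y z : ℂ) :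
    pochTripleSum n x y z = pochTripleSum n y z x := by
  rw [pochTripleSum_comm_left, pochTripleSum_comm_right]

lemma sum_range_choose_mul_poch_mul_poch (m l : ℕ) (x y : ℂ) :
    ∑ j ∈ range (m + 1), (m.choose j : ℂ) * poch (x + j) (m + l - j) *
        poch (y + (m - j : ℕ)) (m + l - (m - j)) =
      poch (x + y + m - 1) m * poch (x + m) l * poch (y + m) l := by
  rw [← sum_antidiagonal_choose_mul_poch_mul_poch, sum_mul, sum_mul,
    Nat.sum_antidiagonal_eq_sum_range_succ_mk]
  refine sum_congr rfl fun j hj ↦ ?_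
  obtain ⟨k, rfl⟩ : ∃ k, m = j + k := ⟨m - j, by simp only [mem_range] at hj; omega⟩
  simp only [Nat.add_sub_cancel_left, show j + k + l - j = k + l by omega,
    show j + k + l - k = j + l by omega, poch_add]
  push_cast
  ring_nf

lemma pochTripleSum_eq_sum (n : ℕ) (x y z : ℂ) :
    pochTripleSum n z x y = ∑ k ∈ range (n + 1), (n.choose k : ℂ) * poch (z + n - k) k *
      poch (x + y - 1 + k) k * poch (x + k) (n - k) * poch (y + k) (n - k) := by
  rw [pochTripleSum, trinomialSum, ← sum_range_reflect]
  refine sum_congr rfl fun k hk ↦ ?_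
  obtain ⟨m, rfl⟩ : ∃ m, n = k + m := ⟨n - k, by simp only [mem_range] at hk; omega⟩
  simp only [show k + m + 1 - 1 - k = m by omega, show k + m - m = k by omega]
  trans (k + m).choose k * poch (z + m) k * ∑ j ∈ range (k + 1),
    (k.choose j : ℂ) * poch (x + j) (k + m - j) * poch (y + (k - j : ℕ)) (k + m - (k - j))
  · rw [mul_sum, Nat.choose_symm_add]
    exact sum_congr rfl fun _ _ ↦ by ring
  · rw [sum_range_choose_mul_poch_mul_poch, Nat.add_sub_cancel_left]
    push_cast
    ring_nf

lemma T_eq_sum (n : ℕ) (a b c : ℂ) (ha : poch a n ≠ 0) (hac : poch (1 + a - c) n ≠ 0)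
    (hc : poch c n ≠ 0) :
    T n a b c = ∑ k ∈ range (n + 1), (n.choose k : ℂ) * poch (1 - b - k) k * poch (a + k) k *
      poch (1 + a - c + k) (n - k) * poch (c + k) (n - k) := by
  rw [T, mul_sum]
  refine sum_congr rfl fun k hk ↦ ?_
  have hkn : k ≤ n := mem_range_succ_iff.mp hk
  have hak := poch_ne_zero_of_le ha hkn
  have hack := poch_ne_zero_of_le hac hkn
  have hck := poch_ne_zero_of_le hc hkn
  have hk! : (k.factorial : ℂ) ≠ 0 := Nat.cast_ne_zero.mpr k.factorial_ne_zero
  have hdup : poch (a / 2) k * poch ((a + 1) / 2) k * 4 ^ k = poch a k * poch (a + k) k := by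
    rw [poch_half_mul_poch_half_add_half, two_mul, poch_add]
  obtain ⟨l, rfl⟩ : ∃ l, n = k + l := ⟨n - k, by omega⟩
  rw [poch_neg_natCast hkn, poch_one_sub_sub, poch_add (1 + a - c), poch_add c,
    Nat.add_sub_cancel_left]
  field_simp
  linear_combination
    ((k + l).choose k : ℂ) * poch b k * poch (1 + a - c + k) l * poch (c + k) l * hdup

lemma T_eq_pochTripleSum (n : ℕ) (a b c : ℂ) (ha : poch a n ≠ 0)
    (hac : poch (1 + a - c) n ≠ 0) (hc : poch c n ≠ 0) :
    T n a b c = pochTripleSum n (1 - b - n) (1 + a - c) c := by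
  rw [T_eq_sum n a b c ha hac hc, pochTripleSum_eq_sum]
  refine sum_congr rfl fun k _ ↦ ?_
  ring_nf

theorem stmt_4_general (n : ℕ) (a b c : ℂ)
    (ha : poch a n ≠ 0) (hac : poch (1 + a - c) n ≠ 0) (hc : poch c n ≠ 0)
    (hcb : poch (c - b - (n : ℂ)) n ≠ 0) (hb : poch (1 - b - (n : ℂ)) n ≠ 0) :
    T n a b c = T n (c - b - (n : ℂ)) (c - a - (n : ℂ)) (1 - b - (n : ℂ)) := by
  have hc' : poch (1 + (c - b - n) - (1 - b - n)) n ≠ 0 := by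
    rwa [show 1 + (c - b - n) - (1 - b - n) = c by ring]
  rw [T_eq_pochTripleSum n a b c ha hac hc, T_eq_pochTripleSum _ _ _ _ hcb hc' hb]
  convert pochTripleSum_rotate n (1 - b - n) (1 + a - c) c using 2 <;> ring

theorem stmt_4 (n : ℕ) (a b c : ℂ)
    (ha : poch a n ≠ 0) (hac : poch (1 + a - c) n ≠ 0) (hc : poch c n ≠ 0)
    (hcb : poch (c - b - (n : ℂ)) n ≠ 0) (hb : poch (1 - b - (n : ℂ)) n ≠ 0)
    (hca : poch (c - a - (n : ℂ)) n ≠ 0) :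
    T n a b c = T n (c - b - (n : ℂ)) (c - a - (n : ℂ)) (1 - b - (n : ℂ)) :=
  stmt_4_general n a b c ha hac hc hcb hb
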